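/- For every n ≥ 2, the number of descents in C_n (indices i with w(i) > w(i+1)) equals 2^{n-2} - 1, and the same holds for D_n. In particular, for n ≥ 2, C_n has exactly one more rise than it has descents. -/

import Mathlib

/-- The pair `(C_n, D_n)` of sigma-words, with `C_0 = D_0 = []`,
`C_{k+1} = C_k · 1 · D_k`, `D_{k+1} = C_k · 2 · D_k`
(so `C_1 = [1]`, `D_1 = [2]`). -/
def sigmaCD : ℕ → List ℕ × List ℕ
  | 0 => ([], [])
  | k + 1 => ((sigmaCD k).1 ++ 1 :: (sigmaCD k).2, (sigmaCD k).1 ++ 2 :: (sigmaCD k).2)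

/-- The sigma-word `C_n`. -/
def sigmaC (n : ℕ) : List ℕ := (sigmaCD n).1

/-- The sigma-word `D_n`. -/
def sigmaD (n : ℕ) : List ℕ := (sigmaCD n).2

/-- Number of occurrences of `p` as a (not necessarily contiguous) subsequence of `w`,
counted with multiplicity of position sets. -/
def subseqCount (p w : List ℕ) : ℕ := (w.sublistsLen p.length).count p

/-- Number of occurrences of `p` as a factor (contiguous subword) of `w`,
i.e. the number of starting positions at which `p` occurs in `w`. -/
def factorCount (p w : List ℕ) : ℕ :=
  (List.range w.length).countP fun i => decide ((w.drop i).take p.length = p)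

/-- The number of rises of `w`: indices `i` with `w(i) < w(i+1)`. -/
def riseCount (w : List ℕ) : ℕ :=
  (List.range (w.length - 1)).countP fun i => decide (w.getD i 0 < w.getD (i + 1) 0)

/-- The number of descents of `w`: indices `i` with `w(i) > w(i+1)`. -/
def descentCount (w : List ℕ) : ℕ :=
  (List.range (w.length - 1)).countP fun i => decide (w.getD (i + 1) 0 < w.getD i 0)

/-!
For `n ≥ 2` both `C_n` and `D_n` begin with `1` and end with `2`, so the seams of
`C_{n+1} = C_n · 1 · D_n` are the adjacent pairs `21, 11` and those of `D_{n+1} = C_n · 2 · D_n`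
are `22, 21`. Hence `C_{n+1}` and `D_{n+1}` each have one descent more, and no rise more, than
`C_n` and `D_n` together; starting from `C_2 = 112`, `D_2 = 122` this gives `2^{n-2} - 1`
descents and `2^{n-2}` rises.
-/

section AdjacentPairs

variable {α : Type*} (r : α → α → Prop) [DecidableRel r]

def adjCount : List α → ℕ
  | a :: b :: t => adjCount (b :: t) + if r a b then 1 else 0
  | _ => 0

@[simp]
theorem adjCount_singleton (a : α) : adjCount r [a] = 0 := rfl

@[simp]
theorem adjCount_cons_cons (a b : α) (t : List α) :
    adjCount r (a :: b :: t) = adjCount r (b :: t) + if r a b then 1 else 0 := rfl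

theorem countP_range_getD_eq_adjCount (d : α) (w : List α) :
    (List.range (w.length - 1)).countP (fun i => decide (r (w.getD i d) (w.getD (i + 1) d))) =
      adjCount r w := by
  induction w with
  | nil => rfl
  | cons a t ih =>
    rcases t with _ | ⟨b, t⟩
    · rfl
    · rw [List.length_cons, Nat.add_sub_cancel, List.length_cons, List.range_succ_eq_map,
        List.countP_cons, List.countP_map, adjCount_cons_cons, ← ih]
      simp [Function.comp_def]

theorem adjCount_append_cons (u : List α) (x : α) (l : List α) :
    adjCount r (u ++ x :: l) = adjCount r (u ++ [x]) + adjCount r (x :: l) := by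
  induction u with
  | nil => simp
  | cons a u ih =>
    rcases u with _ | ⟨c, u⟩
    · simp [Nat.add_comm]
    · simp only [List.cons_append, adjCount_cons_cons] at ih ⊢
      omega

end AdjacentPairs

theorem descentCount_eq_adjCount (w : List ℕ) : descentCount w = adjCount (fun a b => b < a) w :=
  countP_range_getD_eq_adjCount (fun a b => b < a) 0 w

theorem riseCount_eq_adjCount (w : List ℕ) : riseCount w = adjCount (· < ·) w :=
  countP_range_getD_eq_adjCount (· < ·) 0 w

theorem sigmaC_succ (n : ℕ) : sigmaC (n + 1) = sigmaC n ++ 1 :: sigmaD n := rfl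

theorem sigmaD_succ (n : ℕ) : sigmaD (n + 1) = sigmaC n ++ 2 :: sigmaD n := rfl

theorem exists_sigma_eq_one_cons_append_two (m : ℕ) :
    ∃ u v, sigmaC (m + 2) = 1 :: u ++ [2] ∧ sigmaD (m + 2) = 1 :: v ++ [2] := by
  induction m with
  | zero => exact ⟨[1], [2], rfl, rfl⟩
  | succ m ih =>
    obtain ⟨u, v, hC, hD⟩ := ih
    refine ⟨u ++ 2 :: 1 :: 1 :: v, u ++ 2 :: 2 :: 1 :: v, ?_, ?_⟩
    · rw [sigmaC_succ, hC, hD]; simp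
    · rw [sigmaD_succ, hC, hD]; simp

section Recursion

variable (r : ℕ → ℕ → Prop) [DecidableRel r] (m : ℕ)

theorem adjCount_sigmaC_succ :
    adjCount r (sigmaC (m + 3)) = adjCount r (sigmaC (m + 2)) + adjCount r (sigmaD (m + 2)) +
      (if r 2 1 then 1 else 0) + if r 1 1 then 1 else 0 := by
  obtain ⟨u, v, hC, hD⟩ := exists_sigma_eq_one_cons_append_two m
  rw [sigmaC_succ, hC, hD, List.append_assoc, List.singleton_append, List.cons_append,
    ← List.cons_append, adjCount_append_cons]
  simp only [List.cons_append, adjCount_cons_cons]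
  omega

theorem adjCount_sigmaD_succ :
    adjCount r (sigmaD (m + 3)) = adjCount r (sigmaC (m + 2)) + adjCount r (sigmaD (m + 2)) +
      (if r 2 2 then 1 else 0) + if r 2 1 then 1 else 0 := by
  obtain ⟨u, v, hC, hD⟩ := exists_sigma_eq_one_cons_append_two m
  rw [sigmaD_succ, hC, hD, List.append_assoc, List.singleton_append, List.cons_append,
    ← List.cons_append, adjCount_append_cons]
  simp only [List.cons_append, adjCount_cons_cons]
  omega

end Recursion

theorem descentCount_riseCount_sigma (m : ℕ) :
    descentCount (sigmaC (m + 2)) + 1 = 2 ^ m ∧ descentCount (sigmaD (m + 2)) + 1 = 2 ^ m ∧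
      riseCount (sigmaC (m + 2)) = 2 ^ m ∧ riseCount (sigmaD (m + 2)) = 2 ^ m := by
  simp only [descentCount_eq_adjCount, riseCount_eq_adjCount]
  induction m with
  | zero => decide
  | succ m ih =>
    norm_num [adjCount_sigmaC_succ, adjCount_sigmaD_succ, pow_succ]
    omega

theorem descents_sigma (n : ℕ) (hn : 2 ≤ n) :
    descentCount (sigmaC n) = 2 ^ (n - 2) - 1 ∧
    descentCount (sigmaD n) = 2 ^ (n - 2) - 1 ∧
    riseCount (sigmaC n) = descentCount (sigmaC n) + 1 := by
  obtain ⟨m, rfl⟩ := Nat.exists_eq_add_of_le' hn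
  obtain ⟨hdesC, hdesD, hriseC, -⟩ := descentCount_riseCount_sigma m
  rw [Nat.add_sub_cancel]
  omega
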